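/- arXiv:2405.07307 — 5 statements merged into one kernel-verified Lean document; each statement's English description precedes it below -/
import Mathlib

section
/- Let K be a field, n ≥ 1, and let v, w : Fin (n−1) → Kⁿ be two linearly independent families of vectors. Then there exists a matrix A ∈ SLₙ(K) (an n × n matrix over K with determinant 1) such that A · vᵢ = wᵢ for all i. In other words, SLₙ(K) acts transitively on linearly independent (n−1)-tuples of vectors in Kⁿ. -/
set_option maxHeartbeats 1000000 in
/-- `SLₙ(K)` acts transitively on linearly independent `(n-1)`-tuples of
vectors of `Kⁿ`. -/
theorem stmt2 (K : Type*) [Field K] (n : ℕ) (hn : 1 ≤ n)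
    (v w : Fin (n - 1) → (Fin n → K))
    (hv : LinearIndependent K v) (hw : LinearIndependent K w) :
    ∃ A : Matrix.SpecialLinearGroup (Fin n) K,
      ∀ i, (A : Matrix (Fin n) (Fin n) K).mulVec (v i) = w i := by
  obtain ⟨m, rfl⟩ : ∃ m, n = m + 1 := ⟨n - 1, (Nat.succ_pred_eq_of_pos hn).symm⟩
  have hv' : LinearIndependent K (fun i : Fin m => v i) := hv
  have hw' : LinearIndependent K (fun i : Fin m => w i) := hw
  have hlt : m < Module.finrank K (Fin (m + 1) → K) := by simp
  obtain ⟨x, hx⟩ := exists_linearIndependent_snoc_of_lt_finrank hv' hlt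
  obtain ⟨y, hy⟩ := exists_linearIndependent_snoc_of_lt_finrank hw' hlt
  let bv := basisOfLinearIndependentOfCardEqFinrank hx (by simp)
  let bw := basisOfLinearIndependentOfCardEqFinrank hy (by simp)
  have hbv : ⇑bv = Fin.snoc (fun i : Fin m => v i) x := coe_basisOfLinearIndependentOfCardEqFinrank _ _
  have hbw : ⇑bw = Fin.snoc (fun i : Fin m => w i) y := coe_basisOfLinearIndependentOfCardEqFinrank _ _
  set e := Pi.basisFun K (Fin (m + 1))
  set Bv := e.toMatrix bv with hBv
  set Bw := e.toMatrix bw with hBw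
  have : Invertible Bv := e.invertibleToMatrix bv
  have : Invertible Bw := e.invertibleToMatrix bw
  have hdv : IsUnit Bv.det := (isUnit_of_invertible Bv).map Matrix.detMonoidHom
  have hdw : IsUnit Bw.det := (isUnit_of_invertible Bw).map Matrix.detMonoidHom
  have hcolv : ∀ i j, Bv j i = bv i j := fun i j => by
    simp [hBv, Module.Basis.toMatrix_apply, e, Pi.basisFun_repr]
  have hcolw : ∀ i j, Bw j i = bw i j := fun i j => by
    simp [hBw, Module.Basis.toMatrix_apply, e, Pi.basisFun_repr]
  set c : K := Bv.det / Bw.det with hc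
  set Bw' := Bw.updateCol (Fin.last m) (c • fun j => Bw j (Fin.last m)) with hBw'
  set A := Bw' * Bv⁻¹ with hA
  have hdet : A.det = 1 := by
    have h2 : Bw.updateCol (Fin.last m) (fun j => Bw j (Fin.last m)) = Bw := by
      ext i j
      rcases eq_or_ne j (Fin.last m) with rfl | h
      · rw [Matrix.updateCol_self]
      · rw [Matrix.updateCol_ne h]
    have h1 : Bw'.det = c * Bw.det := by
      rw [hBw', Matrix.det_updateCol_smul, h2]
    rw [hA, Matrix.det_mul, h1, Matrix.det_nonsing_inv, Ring.inverse_eq_inv', hc]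
    field_simp [hdv.ne_zero, hdw.ne_zero]
  refine ⟨⟨A, hdet⟩, fun i => ?_⟩
  have hvi : v i = Bv.mulVec (Pi.single (Fin.castSucc i) 1) := by
    ext j
    rw [Matrix.mulVec_single]
    simp [hcolv, hbv, Fin.snoc_castSucc]
  have hcancel : Bv⁻¹.mulVec (Bv.mulVec (Pi.single (Fin.castSucc i) 1))
      = Pi.single (Fin.castSucc i) 1 := by
    rw [Matrix.mulVec_mulVec, Matrix.nonsing_inv_mul _ hdv, Matrix.one_mulVec]
  show A.mulVec (v i) = w i
  rw [hvi, hA, ← Matrix.mulVec_mulVec, hcancel]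
  ext j
  have hne : Fin.castSucc i ≠ Fin.last m := (Fin.castSucc_lt_last i).ne
  simp only [Matrix.mulVec_single, mul_one, MulOpposite.op_one, one_smul, Matrix.col_apply]
  rw [hBw', Matrix.updateCol_ne hne]
  simp [hcolw, hbw, Fin.snoc_castSucc]
end

section
/- Let K be a field, n ≥ 1, and let p, q : Fin n → Kⁿ be two affinely independent families of n points in Kⁿ. Then there exist a matrix A ∈ SLₙ(K) and a vector b ∈ Kⁿ such that A · pᵢ + b = qᵢ for all i. In other words, the affine special linear group ASLₙ(K) = Kⁿ ⋊ SLₙ(K) acts transitively on affinely independent n-tuples of points of Kⁿ. -/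
/-- The affine special linear group `ASLₙ(K) = Kⁿ ⋊ SLₙ(K)` acts transitively
on affinely independent `n`-tuples of points of `Kⁿ`: there are `A ∈ SLₙ(K)`
and `b ∈ Kⁿ` with `A · pᵢ + b = qᵢ` for all `i`. -/
theorem stmt6 (K : Type*) [Field K] (n : ℕ) (hn : 1 ≤ n)
    (p q : Fin n → (Fin n → K))
    (hp : AffineIndependent K p) (hq : AffineIndependent K q) :
    ∃ (A : Matrix.SpecialLinearGroup (Fin n) K) (b : Fin n → K),
      ∀ i, (A : Matrix (Fin n) (Fin n) K).mulVec (p i) + b = q i := by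
  classical
  set m := n - 1 with hm
  have hmn : m + 1 = n := Nat.succ_pred_eq_of_pos hn
  set i0 : Fin n := ⟨0, hn⟩ with hi0
  -- card of the punctured index type
  have hcard : Fintype.card {x : Fin n // x ≠ i0} = m := by
    simp [Fintype.card_subtype_compl, hm]
  let e : {x : Fin n // x ≠ i0} ≃ Fin m := Fintype.equivFinOfCardEq hcard
  -- linearly independent difference families
  have hp' := (affineIndependent_iff_linearIndependent_vsub K p i0).mp hp
  have hq' := (affineIndependent_iff_linearIndependent_vsub K q i0).mp hq
  let f : Fin m → (Fin n → K) := fun j => p (e.symm j : Fin n) - p i0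
  let g : Fin m → (Fin n → K) := fun j => q (e.symm j : Fin n) - q i0
  have hf : LinearIndependent K f := hp'.comp e.symm e.symm.injective
  have hg : LinearIndependent K g := hq'.comp e.symm e.symm.injective
  have hfin : Module.finrank K (Fin n → K) = n := Module.finrank_fin_fun K
  have hlt : m < Module.finrank K (Fin n → K) := by omega
  obtain ⟨x, hx⟩ := exists_linearIndependent_snoc_of_lt_finrank hf hlt
  obtain ⟨y, hy⟩ := exists_linearIndependent_snoc_of_lt_finrank hg hlt
  have hcard' : Fintype.card (Fin (m + 1)) = Module.finrank K (Fin n → K) := by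
    simp [hfin, hmn]
  let Bp : Module.Basis (Fin (m + 1)) K (Fin n → K) :=
    basisOfLinearIndependentOfCardEqFinrank hx hcard'
  let Bq : Module.Basis (Fin (m + 1)) K (Fin n → K) :=
    basisOfLinearIndependentOfCardEqFinrank hy hcard'
  have hBp : ⇑Bp = Fin.snoc f x := coe_basisOfLinearIndependentOfCardEqFinrank hx hcard'
  have hBq : ⇑Bq = Fin.snoc g y := coe_basisOfLinearIndependentOfCardEqFinrank hy hcard'
  -- the change-of-basis determinant, as a unit
  have hd0 : IsUnit (Bp.det Bq) := Bp.isUnit_det Bq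
  let u : Kˣ := hd0.unit
  have hu : (u : K) = Bp.det Bq := hd0.unit_spec
  -- rescale the last vector of Bq to kill the determinant
  let w : Fin (m + 1) → Kˣ := fun j => if j = Fin.last m then u⁻¹ else 1
  let Bq' : Module.Basis (Fin (m + 1)) K (Fin n → K) := Bq.unitsSMul w
  let L : (Fin n → K) →ₗ[K] (Fin n → K) := (Bp.equiv Bq' (Equiv.refl _)).toLinearMap
  have hL : ∀ j, L (Bp j) = Bq' j := fun j => Bp.equiv_apply j Bq' (Equiv.refl _)
  -- determinant of L is 1
  have hprod : ∏ j, (w j : K) = (↑u : K)⁻¹ := by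
    have hj : ∀ j, (w j : K) = if j = Fin.last m then (↑u : K)⁻¹ else 1 := by
      intro j; simp [w, apply_ite Units.val]
    rw [Finset.prod_congr rfl fun j _ => hj j,
      Finset.prod_ite_eq' Finset.univ (Fin.last m) fun _ => (↑u : K)⁻¹]
    simp
  have hdet1 : Bp.det ⇑Bq' = 1 := by
    rw [Module.Basis.det_apply, ← Bp.toMatrix_mul_toMatrix Bq ⇑Bq', Module.Basis.toMatrix_unitsSMul,
      Matrix.det_mul, Matrix.det_diagonal, ← Module.Basis.det_apply]
    simp only [Function.comp_apply, Function.comp_def]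
    rw [hprod, ← hu]
    exact mul_inv_cancel₀ u.ne_zero
  have hdetL : LinearMap.det L = 1 := by
    have hcomp : ⇑L ∘ ⇑Bp = ⇑Bq' := funext hL
    have := Bp.det_comp L ⇑Bp
    rw [hcomp, hdet1, Module.Basis.det_self, mul_one] at this
    exact this.symm
  -- the matrix
  let A : Matrix (Fin n) (Fin n) K := LinearMap.toMatrix' L
  have hAdet : A.det = 1 := by
    rw [LinearMap.det_toMatrix', hdetL]
  have hAmul : ∀ v, A.mulVec v = L v := fun v => by
    rw [← Matrix.toLin'_apply, Matrix.toLin'_toMatrix']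
  refine ⟨⟨A, hAdet⟩, q i0 - L (p i0), fun i => ?_⟩
  simp only [hAmul]
  by_cases hi : i = i0
  · subst hi; abel
  -- key: L maps differences to differences
  · have key : L (p i - p i0) = q i - q i0 := by
      have hji : e.symm (e ⟨i, hi⟩) = ⟨i, hi⟩ := e.symm_apply_apply _
      have hfi : f (e ⟨i, hi⟩) = p i - p i0 := by simp [f, hji]
      have hgi : g (e ⟨i, hi⟩) = q i - q i0 := by simp [g, hji]
      set j := e ⟨i, hi⟩
      have h1 : Bp (Fin.castSucc j) = p i - p i0 := by
        rw [hBp, Fin.snoc_castSucc, hfi]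
      have h2 : Bq' (Fin.castSucc j) = q i - q i0 := by
        have hne : Fin.castSucc j ≠ Fin.last m := (Fin.castSucc_lt_last j).ne
        rw [Module.Basis.unitsSMul_apply]
        simp only [w, if_neg hne]
        rw [hBq, Fin.snoc_castSucc, hgi, one_smul]
      rw [← h1, hL, h2]
    rw [map_sub] at key
    have : L (p i) = q i - q i0 + L (p i0) := by linear_combination (norm := abel) key
    rw [this]; abel
end

section
/- Let K be a field, n ≥ 0, and let v, w : Fin (n+2) → K^{n+1} be two families of vectors in general position, meaning that for each family every subfamily of n+1 of its vectors is linearly independent. Then there exist an invertible matrix A ∈ GL_{n+1}(K) and units c₀, …, c_{n+1} ∈ Kˣ such that A · vᵢ = cᵢ · wᵢ for all i. (This is the existence part of the sharp generic (n+2)-transitivity of PGL_{n+1}(K) on projective n-space: any projective frame can be mapped to any other.) -/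
/-- Any family of `n+2` vectors of `K^{n+1}` in general position is, up to
nonzero scalars, the image under some invertible matrix of the standard
projective frame (standard basis vectors plus the all-ones vector). -/
lemma frame_aux {K : Type*} [Field K] {n : ℕ} (v : Fin (n + 2) → (Fin (n + 1) → K))
    (hv : ∀ s : Finset (Fin (n + 2)), s.card = n + 1 →
      LinearIndependent K (fun i : s => v (i : Fin (n + 2)))) :
    ∃ (A : (Matrix (Fin (n + 1)) (Fin (n + 1)) K)ˣ) (c : Fin (n + 2) → Kˣ),
      ∀ i, (A : Matrix (Fin (n + 1)) (Fin (n + 1)) K).mulVec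
        (Fin.lastCases 1 (fun j => Pi.single j 1) i) = (c i : K) • v i := by
  have hcs : Function.Injective (Fin.castSucc : Fin (n+1) → Fin (n+2)) :=
    Fin.castSucc_injective _
  -- the first n+1 vectors are linearly independent
  have hcard0 : (Finset.univ.image (Fin.castSucc : Fin (n+1) → Fin (n+2))).card = n + 1 := by
    rw [Finset.card_image_of_injective _ hcs, Finset.card_univ, Fintype.card_fin]
  have hli0 := hv _ hcard0
  have hli : LinearIndependent K (fun i : Fin (n+1) => v (Fin.castSucc i)) := by
    have heq : (fun i : Fin (n+1) => v (Fin.castSucc i)) =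
        (fun i : (Finset.univ.image (Fin.castSucc : Fin (n+1) → Fin (n+2))) => v i) ∘
          (fun i : Fin (n+1) =>
            (⟨Fin.castSucc i, Finset.mem_image_of_mem _ (Finset.mem_univ _)⟩ : (Finset.univ.image (Fin.castSucc : Fin (n+1) → Fin (n+2))))) := rfl
    rw [heq]
    exact hli0.comp _ (fun x y hxy => hcs (by simpa using congrArg Subtype.val hxy))
  have hcardfr : Fintype.card (Fin (n+1)) = Module.finrank K (Fin (n+1) → K) := by simp
  let b : Module.Basis (Fin (n+1)) K (Fin (n+1) → K) :=
    basisOfLinearIndependentOfCardEqFinrank hli hcardfr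
  have hb : ∀ i, b i = v (Fin.castSucc i) := fun i => by
    simp [b, coe_basisOfLinearIndependentOfCardEqFinrank]
  set a : Fin (n+1) → K := fun i => b.repr (v (Fin.last (n+1))) i with ha_def
  have hsum : ∑ i, a i • v (Fin.castSucc i) = v (Fin.last (n+1)) := by
    conv_rhs => rw [← b.sum_repr (v (Fin.last (n+1)))]
    refine Finset.sum_congr rfl fun i _ => ?_
    rw [hb]
  -- each coordinate of the last vector w.r.t. the basis is nonzero
  have ha : ∀ j, a j ≠ 0 := by
    intro j hj
    have hcard1 : (Finset.univ.erase (Fin.castSucc j)).card = n + 1 := by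
      rw [Finset.card_erase_of_mem (Finset.mem_univ _), Finset.card_univ, Fintype.card_fin]
      omega
    have hli1 := hv _ hcard1
    set g : Fin (n+2) → K := Fin.lastCases 1 (fun i => -(a i)) with hg
    have hgc : ∀ i : Fin (n+1), g (Fin.castSucc i) = -(a i) := fun i =>
      Fin.lastCases_castSucc i
    have hgl : g (Fin.last (n+1)) = 1 := Fin.lastCases_last
    have huniv : ∑ k, g k • v k = 0 := by
      rw [Fin.sum_univ_castSucc]
      have h1 : ∀ i : Fin (n+1), g (Fin.castSucc i) • v (Fin.castSucc i)
          = -(a i • v (Fin.castSucc i)) := by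
        intro i
        rw [hgc, neg_smul]
      rw [Finset.sum_congr rfl fun i _ => h1 i, Finset.sum_neg_distrib, hsum,
        hgl, one_smul, neg_add_cancel]
    have hzero : ∑ k ∈ Finset.univ.erase (Fin.castSucc j), g k • v k = 0 := by
      rw [Finset.sum_erase _ (by rw [hgc, hj, neg_zero, zero_smul]), huniv]
    have hlast : Fin.last (n+1) ∈ Finset.univ.erase (Fin.castSucc j) := by
      refine Finset.mem_erase.mpr ⟨?_, Finset.mem_univ _⟩
      exact (Fin.castSucc_lt_last j).ne'
    have := Fintype.linearIndependent_iff.mp hli1 (fun k => g k)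
      (by rw [← Finset.sum_coe_sort (Finset.univ.erase (Fin.castSucc j))
          (fun k => g k • v k)] at hzero; exact hzero)
      ⟨Fin.last (n+1), hlast⟩
    rw [hgl] at this
    exact one_ne_zero this
  -- build the matrix: columns are `a j • v (castSucc j)`
  let e : Module.Basis (Fin (n+1)) K (Fin (n+1) → K) := Pi.basisFun K (Fin (n+1))
  let M : Matrix (Fin (n+1)) (Fin (n+1)) K := e.toMatrix b
  let M' : Matrix (Fin (n+1)) (Fin (n+1)) K := b.toMatrix e
  have hMM' : M * M' = 1 := Module.Basis.toMatrix_mul_toMatrix_flip e b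
  have hM'M : M' * M = 1 := Module.Basis.toMatrix_mul_toMatrix_flip b e
  let D : Matrix (Fin (n+1)) (Fin (n+1)) K := Matrix.diagonal a
  let D' : Matrix (Fin (n+1)) (Fin (n+1)) K := Matrix.diagonal (fun i => (a i)⁻¹)
  have hDD' : D * D' = 1 := by
    rw [Matrix.diagonal_mul_diagonal]
    rw [show (fun i => a i * (a i)⁻¹) = fun _ => (1:K) from funext fun i => mul_inv_cancel₀ (ha i)]
    exact Matrix.diagonal_one
  have hD'D : D' * D = 1 := by
    rw [Matrix.diagonal_mul_diagonal]
    rw [show (fun i => (a i)⁻¹ * a i) = fun _ => (1:K) from funext fun i => inv_mul_cancel₀ (ha i)]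
    exact Matrix.diagonal_one
  refine ⟨⟨M * D, D' * M', ?_, ?_⟩,
    Fin.lastCases 1 (fun j => Units.mk0 (a j) (ha j)), ?_⟩
  · calc M * D * (D' * M') = M * (D * D') * M' := by noncomm_ring
      _ = 1 := by rw [hDD', mul_one, hMM']
  · calc D' * M' * (M * D) = D' * (M' * M) * D := by noncomm_ring
      _ = 1 := by rw [hM'M, mul_one, hD'D]
  · have hMentry : ∀ i j, M i j = v (Fin.castSucc j) i := by
      intro i j
      show (Pi.basisFun K (Fin (n+1))).toMatrix (⇑b) i j = _
      rw [Module.Basis.toMatrix_apply, hb, Pi.basisFun_repr]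
    have hMD : ∀ r k, (M * D) r k = v (Fin.castSucc k) r * a k := by
      intro r k
      show (M * Matrix.diagonal a) r k = _
      rw [Matrix.mul_diagonal, hMentry]
    intro i
    refine Fin.lastCases ?_ (fun j => ?_) i
    · rw [Fin.lastCases_last]
      funext r
      simp only [Units.val_one, one_smul, Matrix.mulVec, dotProduct, Pi.one_apply, mul_one]
      rw [Finset.sum_congr rfl fun k _ => hMD r k, ← hsum]
      simp [Finset.sum_apply, mul_comm]
    · rw [Fin.lastCases_castSucc, Matrix.mulVec_single]
      simp only [Fin.lastCases_castSucc]
      funext r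
      show (M * D) r j * 1 = a j * v (Fin.castSucc j) r
      rw [hMD, mul_one, mul_comm]

/-- Existence part of sharp generic `(n+2)`-transitivity of `PGL_{n+1}(K)` on
projective `n`-space: given two families `v, w` of `n+2` vectors of `K^{n+1}`
in general position (every subfamily of `n+1` of the vectors is linearly
independent), some invertible matrix `A` maps each `vᵢ` to a nonzero scalar
multiple `cᵢ • wᵢ` of `wᵢ`. -/
theorem stmt7 (K : Type*) [Field K] (n : ℕ)
    (v w : Fin (n + 2) → (Fin (n + 1) → K))
    (hv : ∀ s : Finset (Fin (n + 2)), s.card = n + 1 →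
      LinearIndependent K (fun i : s => v (i : Fin (n + 2))))
    (hw : ∀ s : Finset (Fin (n + 2)), s.card = n + 1 →
      LinearIndependent K (fun i : s => w (i : Fin (n + 2)))) :
    ∃ (A : (Matrix (Fin (n + 1)) (Fin (n + 1)) K)ˣ) (c : Fin (n + 2) → Kˣ),
      ∀ i, (A : Matrix (Fin (n + 1)) (Fin (n + 1)) K).mulVec (v i)
        = (c i : K) • w i := by
  obtain ⟨Av, cv, hAv⟩ := frame_aux v hv
  obtain ⟨Aw, cw, hAw⟩ := frame_aux w hw
  refine ⟨Aw * Av⁻¹, fun i => cw i * (cv i)⁻¹, fun i => ?_⟩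
  have h1 : ((Av⁻¹ : (Matrix (Fin (n+1)) (Fin (n+1)) K)ˣ) : Matrix (Fin (n+1)) (Fin (n+1)) K).mulVec (v i)
      = ((cv i : K)⁻¹) • Fin.lastCases 1 (fun j => Pi.single j 1) i := by
    have hAvinv : ((Av⁻¹ : (Matrix (Fin (n+1)) (Fin (n+1)) K)ˣ) : Matrix (Fin (n+1)) (Fin (n+1)) K) * (Av : Matrix (Fin (n+1)) (Fin (n+1)) K) = 1 :=
      Av.inv_mul
    have h2 := congrArg (fun x => ((Av⁻¹ : (Matrix (Fin (n+1)) (Fin (n+1)) K)ˣ) : Matrix (Fin (n+1)) (Fin (n+1)) K).mulVec x) (hAv i)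
    rw [Matrix.mulVec_mulVec, hAvinv, Matrix.one_mulVec, Matrix.mulVec_smul] at h2
    rw [h2, smul_smul, inv_mul_cancel₀ (Units.ne_zero (cv i)), one_smul]
  rw [show ((Aw * Av⁻¹ : (Matrix (Fin (n+1)) (Fin (n+1)) K)ˣ) : Matrix (Fin (n+1)) (Fin (n+1)) K)
      = (Aw : Matrix (Fin (n+1)) (Fin (n+1)) K) * (Av⁻¹ : (Matrix (Fin (n+1)) (Fin (n+1)) K)ˣ) from rfl,
    ← Matrix.mulVec_mulVec, h1, Matrix.mulVec_smul, hAw i, smul_smul,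
    Units.val_mul, Units.val_inv_eq_inv_val, mul_comm]
end

section
/- Let K be a field, n ≥ 0, and let v : Fin (n+2) → K^{n+1} be a family of vectors in general position, meaning that every subfamily of n+1 of the vectors is linearly independent. If A ∈ GL_{n+1}(K) is an invertible matrix for which there exist units c₀, …, c_{n+1} ∈ Kˣ with A · vᵢ = cᵢ · vᵢ for all i, then A is a scalar matrix: A = λ · I for some λ ∈ Kˣ. (This is the uniqueness-up-to-scalar part of the sharp generic (n+2)-transitivity of PGL_{n+1}(K) on projective n-space.) -/
/-- Uniqueness-up-to-scalar part of sharp generic `(n+2)`-transitivity of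
`PGL_{n+1}(K)` on projective `n`-space: if `v` is a family of `n+2` vectors of
`K^{n+1}` in general position and an invertible matrix `A` maps each `vᵢ` to a
nonzero scalar multiple of itself, then `A` is a scalar matrix. -/
theorem stmt8 (K : Type*) [Field K] (n : ℕ)
    (v : Fin (n + 2) → (Fin (n + 1) → K))
    (hv : ∀ s : Finset (Fin (n + 2)), s.card = n + 1 →
      LinearIndependent K (fun i : s => v (i : Fin (n + 2))))
    (A : (Matrix (Fin (n + 1)) (Fin (n + 1)) K)ˣ) (c : Fin (n + 2) → Kˣ)
    (hA : ∀ i, (A : Matrix (Fin (n + 1)) (Fin (n + 1)) K).mulVec (v i)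
      = (c i : K) • v i) :
    ∃ lam : Kˣ, (A : Matrix (Fin (n + 1)) (Fin (n + 1)) K)
      = (lam : K) • (1 : Matrix (Fin (n + 1)) (Fin (n + 1)) K) := by
  classical
  set w : Fin (n + 1) → (Fin (n + 1) → K) := fun i => v i.castSucc with hw
  have hwli : LinearIndependent K w := by
    have hs : (Finset.univ.image (Fin.castSucc : Fin (n+1) → Fin (n+2))).card = n + 1 := by
      rw [Finset.card_image_of_injective _ (Fin.castSucc_injective _)]; simp
    have h := hv _ hs
    have he : w = (fun i : (Finset.univ.image (Fin.castSucc : Fin (n+1) → Fin (n+2))) =>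
        v (i : Fin (n+2))) ∘ (fun i : Fin (n+1) => ⟨i.castSucc, Finset.mem_image_of_mem _ (Finset.mem_univ i)⟩) := rfl
    rw [he]
    exact h.comp _ (fun i j hij => by
      have := congrArg Subtype.val hij
      exact Fin.castSucc_injective _ this)
  have hcard : Fintype.card (Fin (n+1)) = Module.finrank K (Fin (n+1) → K) := by simp
  let b : Module.Basis (Fin (n+1)) K (Fin (n+1) → K) :=
    basisOfLinearIndependentOfCardEqFinrank hwli hcard
  have hb : ∀ i, b i = w i := fun i => by
    simp [b, coe_basisOfLinearIndependentOfCardEqFinrank]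
  set L : Fin (n+2) := Fin.last (n+1) with hL
  set a : Fin (n+1) → K := fun i => b.repr (v L) i with ha
  have hrepr : v L = ∑ i, a i • w i := by
    conv_lhs => rw [← b.sum_repr (v L)]
    exact Finset.sum_congr rfl fun i _ => by rw [hb]
  -- each coefficient is nonzero
  have hane : ∀ i, a i ≠ 0 := by
    intro i hai
    set s' : Finset (Fin (n+2)) := Finset.univ.erase i.castSucc with hs'
    have hs'c : s'.card = n + 1 := by
      rw [hs', Finset.card_erase_of_mem (Finset.mem_univ _)]; simp
    have hli := hv s' hs'c
    set g : Fin (n+2) → K := Fin.lastCases (-1) a with hg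
    have hgL : g L = -1 := by simp [hg, hL]
    have hgc : ∀ j : Fin (n+1), g j.castSucc = a j := fun j => by simp [hg]
    have hsum : ∑ j ∈ s', g j • v j = 0 := by
      rw [hs', Finset.sum_erase _ (by rw [hgc, hai, zero_smul])]
      rw [Fin.sum_univ_castSucc]
      have : ∑ j : Fin (n+1), g j.castSucc • v j.castSucc = ∑ j, a j • w j := by
        exact Finset.sum_congr rfl fun j _ => by rw [hgc]
      rw [this, ← hL, hgL, ← hrepr]
      simp
    have hLm : L ∈ s' := by
      rw [hs', Finset.mem_erase]
      exact ⟨(Fin.castSucc_lt_last i).ne', Finset.mem_univ _⟩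
    have := Fintype.linearIndependent_iff.1 hli (fun j => g j)
      (by rw [Finset.sum_coe_sort s' (fun j => g j • v j)]; exact hsum) ⟨L, hLm⟩
    rw [hgL] at this
    exact one_ne_zero (neg_injective (this.trans neg_zero.symm))
  -- all scalars equal c L
  have hceq : ∀ i : Fin (n+1), (c i.castSucc : K) = (c L : K) := by
    intro i
    have h1 : (A : Matrix (Fin (n+1)) (Fin (n+1)) K).mulVec (v L)
        = ∑ j, (a j * (c j.castSucc : K)) • w j := by
      rw [hrepr]
      simp only [← Matrix.mulVecLin_apply, map_sum, map_smul]
      refine Finset.sum_congr rfl fun j _ => ?_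
      rw [Matrix.mulVecLin_apply, hA, smul_smul, mul_comm]
    have h2 : (A : Matrix (Fin (n+1)) (Fin (n+1)) K).mulVec (v L)
        = ∑ j, ((c L : K) * a j) • w j := by
      rw [hA, hrepr, Finset.smul_sum]
      exact Finset.sum_congr rfl fun j _ => by rw [smul_smul]
    have h3 : ∑ j, ((a j * (c j.castSucc : K)) - ((c L : K) * a j)) • w j = 0 := by
      simp only [sub_smul, Finset.sum_sub_distrib, ← h1, ← h2, sub_self]
    have h4 := Fintype.linearIndependent_iff.1 hwli _ h3 i
    have h5 : a i * ((c i.castSucc : K) - (c L : K)) = 0 := by linear_combination h4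
    rcases mul_eq_zero.1 h5 with h | h
    · exact absurd h (hane i)
    · exact sub_eq_zero.1 h
  refine ⟨c L, ?_⟩
  have : Matrix.toLin' (A : Matrix (Fin (n+1)) (Fin (n+1)) K)
      = Matrix.toLin' ((c L : K) • (1 : Matrix (Fin (n+1)) (Fin (n+1)) K)) := by
    apply b.ext
    intro i
    rw [Matrix.toLin'_apply, Matrix.toLin'_apply, hb]
    rw [Matrix.smul_mulVec, Matrix.one_mulVec]
    rw [hw]
    rw [hA, hceq]
  exact Matrix.toLin'.injective this
end

section
/- Let G be a finite solvable group acting faithfully and primitively on a finite set X with at least two elements. Then G contains a normal subgroup S which is elementary abelian (abelian of exponent p for some prime p) and whose induced action on X is regular. That is, every finite solvable primitive permutation group is of affine type. -/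
/-- Every finite solvable group acting faithfully and primitively on a finite
set with at least two elements contains an elementary abelian normal subgroup
acting regularly: every finite solvable primitive permutation group is of
affine type. -/
theorem stmt16 (G X : Type*) [Group G] [Finite G] [MulAction G X] [Finite X]
    [Nontrivial X]
    (hsolv : IsSolvable G)
    (hfaithful : ∀ g : G, (∀ x : X, g • x = x) → g = 1)
    (htrans : MulAction.IsPretransitive G X)
    (hprim : ∀ r : X → X → Prop, Equivalence r →
      (∀ g : G, ∀ x y : X, r x y → r (g • x) (g • y)) →
      (∀ x y : X, r x y ↔ x = y) ∨ (∀ x y : X, r x y)) :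
    ∃ (S : Subgroup G) (p : ℕ), S.Normal ∧ p.Prime ∧
      (∀ s ∈ S, ∀ t ∈ S, s * t = t * s) ∧
      (∀ s ∈ S, s ^ p = 1) ∧
      (∀ x y : X, ∃! s : S, (s : G) • x = y) := by
  classical
  -- G is nontrivial
  obtain ⟨x₀, y₀, hxy⟩ := exists_pair_ne X
  obtain ⟨g₀, hg₀⟩ := htrans.exists_smul_eq x₀ y₀
  have hGnt : Nontrivial G := by
    refine ⟨g₀, 1, fun h => hxy ?_⟩
    rw [h, one_smul] at hg₀; exact hg₀.symm ▸ rfl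
  -- every nontrivial normal subgroup acts transitively
  have key : ∀ N : Subgroup G, N.Normal → N ≠ ⊥ →
      ∀ x y : X, ∃ n ∈ N, n • x = y := by
    intro N hN hNbot x y
    set r : X → X → Prop := fun a b => ∃ n ∈ N, n • a = b with hr
    have hequiv : Equivalence r := by
      constructor
      · intro a; exact ⟨1, N.one_mem, one_smul _ _⟩
      · rintro a b ⟨n, hn, rfl⟩
        exact ⟨n⁻¹, N.inv_mem hn, by simp⟩
      · rintro a b c ⟨n, hn, rfl⟩ ⟨m, hm, rfl⟩
        exact ⟨m * n, N.mul_mem hm hn, mul_smul m n a⟩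
    have hinv : ∀ g : G, ∀ a b : X, r a b → r (g • a) (g • b) := by
      rintro g a b ⟨n, hn, rfl⟩
      exact ⟨g * n * g⁻¹, hN.conj_mem n hn g, by simp [mul_smul]⟩
    rcases hprim r hequiv hinv with h | h
    · exfalso
      obtain ⟨n, hn1⟩ := Subgroup.ne_bot_iff_exists_ne_one.mp hNbot
      have : ¬ ∀ z : X, (n : G) • z = z := fun hh =>
        hn1 (Subtype.ext (hfaithful n hh))
      push_neg at this
      obtain ⟨z, hz⟩ := this
      exact hz ((h z ((n : G) • z)).mp ⟨n, n.2, rfl⟩).symm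
    · exact h x y
  -- last nontrivial term of the derived series: abelian normal subgroup
  obtain ⟨m, hm⟩ := hsolv
  obtain ⟨gnt, hgnt⟩ := exists_ne (1 : G)
  have h0 : derivedSeries G 0 ≠ ⊥ := by
    rw [derivedSeries_zero]
    intro h
    exact hgnt (Subgroup.mem_bot.mp (h ▸ Subgroup.mem_top gnt))
  have hmne : m ≠ 0 := fun h => h0 (h ▸ hm)
  let k := Nat.find (⟨m, hm⟩ : ∃ n, derivedSeries G n = ⊥) - 1
  have hk' := Nat.find_spec (⟨m, hm⟩ : ∃ n, derivedSeries G n = ⊥)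
  have hfindne : Nat.find (⟨m, hm⟩ : ∃ n, derivedSeries G n = ⊥) ≠ 0 := by
    intro h; exact h0 (h ▸ hk')
  have hksucc : k + 1 = Nat.find (⟨m, hm⟩ : ∃ n, derivedSeries G n = ⊥) :=
    Nat.succ_pred_eq_of_pos (Nat.pos_of_ne_zero hfindne)
  set A := derivedSeries G k with hA
  have hAbot : A ≠ ⊥ := Nat.find_min _ (Nat.sub_lt (Nat.pos_of_ne_zero hfindne) one_pos)
  have hAcomm_bot : ⁅A, A⁆ = ⊥ := by
    have : derivedSeries G (k + 1) = ⊥ := hksucc ▸ hk'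
    simpa [derivedSeries_succ] using this
  have hAnormal : A.Normal := derivedSeries_normal G k
  have hAcomm : ∀ a ∈ A, ∀ b ∈ A, a * b = b * a := by
    intro a ha b hb
    open scoped commutatorElement in
    have : ⁅a, b⁆ ∈ ⁅A, A⁆ := Subgroup.commutator_mem_commutator ha hb
    rw [hAcomm_bot, Subgroup.mem_bot] at this
    exact commutatorElement_eq_one_iff_mul_comm.mp this
  -- a prime p dividing |A| and an element of order p
  have hAnt : Nontrivial A := by
    obtain ⟨a, ha⟩ := Subgroup.ne_bot_iff_exists_ne_one.mp hAbot
    exact ⟨a, 1, ha⟩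
  set p := (Nat.card A).minFac with hp
  have hcard : 1 < Nat.card A := Finite.one_lt_card
  have hpprime : p.Prime := Nat.minFac_prime (by omega)
  have : Fact p.Prime := ⟨hpprime⟩
  obtain ⟨a, ha⟩ := exists_prime_orderOf_dvd_card' (G := A) p
    (Nat.minFac_dvd _)
  -- the p-torsion subgroup of A
  let S : Subgroup G :=
    { carrier := {g : G | g ∈ A ∧ g ^ p = 1}
      one_mem' := ⟨A.one_mem, one_pow p⟩
      mul_mem' := by
        rintro s t ⟨hs, hs'⟩ ⟨ht, ht'⟩
        refine ⟨A.mul_mem hs ht, ?_⟩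
        have hc : Commute s t := hAcomm s hs t ht
        rw [hc.mul_pow, hs', ht', one_mul]
      inv_mem' := by
        rintro s ⟨hs, hs'⟩
        exact ⟨A.inv_mem hs, by rw [inv_pow, hs', inv_one]⟩ }
  have hSA : ∀ s ∈ S, s ∈ A := fun s hs => hs.1
  have hSnormal : S.Normal := by
    constructor
    intro s hs g
    exact ⟨hAnormal.conj_mem s hs.1 g, by rw [conj_pow, hs.2, mul_one, mul_inv_cancel]⟩
  have hSbot : S ≠ ⊥ := by
    rw [Subgroup.ne_bot_iff_exists_ne_one]
    refine ⟨⟨(a : G), a.2, ?_⟩, ?_⟩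
    · have : a ^ p = 1 := by rw [← ha, pow_orderOf_eq_one]
      exact_mod_cast congrArg (Subtype.val) this
    · intro h
      have : (a : G) = 1 := congrArg Subtype.val h
      have : a = 1 := Subtype.ext this
      rw [this, orderOf_one] at ha
      exact hpprime.one_lt.ne' ha.symm
  -- S acts freely
  have hfree : ∀ s ∈ S, ∀ x : X, s • x = x → s = 1 := by
    intro s hs x hx
    refine hfaithful s fun y => ?_
    obtain ⟨t, ht, rfl⟩ := key S hSnormal hSbot x y
    rw [← mul_smul, hAcomm s (hSA s hs) t (hSA t ht), mul_smul, hx]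
  refine ⟨S, p, hSnormal, hpprime, fun s hs t ht => hAcomm s (hSA s hs) t (hSA t ht),
    fun s hs => hs.2, fun x y => ?_⟩
  obtain ⟨n, hn, hnxy⟩ := key S hSnormal hSbot x y
  refine ⟨⟨n, hn⟩, hnxy, ?_⟩
  rintro ⟨t, ht⟩ htx
  have h1 : (n⁻¹ * t) • x = x := by
    rw [mul_smul, htx, ← hnxy, inv_smul_smul]
  have := hfree (n⁻¹ * t) (S.mul_mem (S.inv_mem hn) ht) x h1
  have : t = n := by
    have := congrArg (fun z => n * z) this
    simpa [mul_assoc] using this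
  exact Subtype.ext this
end
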